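/- The bracket polynomial ⟪i_1⋯i_n⟫ equals •_{i_1}⋯•_{i_n} − B^+(Δ'(•_{i_1}⋯•_{i_n})), where Δ' is the reduced BCK coproduct and B^+ : H({1,…,d}) ⊗ H({1,…,d}) → H(A_γ^d) is the linear map sending σ ⊗ •_{i_1}⋯•_{i_n} to B^+_{(i_1⋯i_n)}(σ) and vanishing on σ ⊗ τ whenever τ is not a forest of single nodes. -/

import Mathlib

open scoped TensorProduct Classical

noncomputable section

/-- The sub-tuple of the list `l` indexed by a set of positions `S`
(taken in increasing order of positions). -/
def subL {d : ℕ} (l : List (Fin d)) (S : Finset (Fin l.length)) : List (Fin d) :=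
  (S.sort (· ≤ ·)).map l.get

/-- The forest of single nodes `•_{i₁}⋯•_{iₙ}` with decorations from `l`. -/
def dotP {d : ℕ} {H : Type*} [CommRing H] [Algebra ℝ H]
    (B : List (Fin d) → H →ₗ[ℝ] H) (l : List (Fin d)) : H :=
  (l.map fun i => B [i] (1 : H)).prod

/-- The bracket polynomial
`⟪i₁⋯iₙ⟫ = •_{i₁}⋯•_{iₙ} − Σ_{{a,b}} B⁺_{(b)}(•_{a})`,
the sum over all splittings of the indices into two non-empty parts. -/
def bpOf {d : ℕ} {H : Type*} [CommRing H] [Algebra ℝ H]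
    (B : List (Fin d) → H →ₗ[ℝ] H) (l : List (Fin d)) : H :=
  dotP B l -
    ∑ S ∈ (Finset.univ : Finset (Finset (Fin l.length))).filter
        (fun S => S ≠ ∅ ∧ S ≠ Finset.univ),
      B (subL l S) (dotP B (subL l Sᶜ))

/- Every `•ᵢ = B⁺_{(i)}(1)` is primitive, by the cocycle identity of `B⁺` and
`Δ 1 = 1 ⊗ 1`. Multiplicativity of `Δ` then expands `Δ(•_{i₁}⋯•_{iₙ})` as the sum, over all
subsets `S` of positions, of `•_{Sᶜ} ⊗ •_S`; removing the two trivial splittings leaves `Δ'`,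
and applying `B⁺` term by term turns `•_{Sᶜ} ⊗ •_S` into `B⁺_{(S)}(•_{Sᶜ})`. -/

section Coproduct

variable {R A : Type*} [CommSemiring R] [CommSemiring A] [Algebra R A]

theorem coproduct_apply_one_of_cocycle (Δ : A →ₐ[R] A ⊗[R] A) (β : A →ₗ[R] A)
    (hβ : ∀ σ, Δ (β σ) = β σ ⊗ₜ[R] 1 + β.lTensor A (Δ σ)) :
    Δ (β 1) = β 1 ⊗ₜ[R] 1 + 1 ⊗ₜ[R] β 1 := by
  rw [hβ, map_one Δ, Algebra.TensorProduct.one_def, LinearMap.lTensor_tmul]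

theorem coproduct_prod_of_primitive {ι : Type*} [Fintype ι] [DecidableEq ι]
    (Δ : A →ₐ[R] A ⊗[R] A) (x : ι → A) (hx : ∀ i, Δ (x i) = x i ⊗ₜ[R] 1 + 1 ⊗ₜ[R] x i) :
    Δ (∏ i, x i) = ∑ S : Finset ι, (∏ i ∈ Sᶜ, x i) ⊗ₜ[R] (∏ i ∈ S, x i) := by
  have hleft : ∀ s : Finset ι, ∏ i ∈ s, x i ⊗ₜ[R] (1 : A) = (∏ i ∈ s, x i) ⊗ₜ[R] 1 := fun s =>
    (map_prod (Algebra.TensorProduct.includeLeft (S := R)) x s).symm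
  have hright : ∀ s : Finset ι, ∏ i ∈ s, (1 : A) ⊗ₜ[R] x i = 1 ⊗ₜ[R] ∏ i ∈ s, x i := fun s =>
    (map_prod Algebra.TensorProduct.includeRight x s).symm
  simp_rw [map_prod, hx, add_comm (x _ ⊗ₜ[R] (1 : A)), Fintype.prod_add, hright, hleft,
    Algebra.TensorProduct.tmul_mul_tmul, one_mul, mul_one]

end Coproduct

theorem Finset.sum_filter_ne_and_ne {α M : Type*} [Fintype α] [DecidableEq α] [AddCommGroup M]
    (f : α → M) {a b : α} (hab : a ≠ b) :
    ∑ x ∈ univ.filter (fun x => x ≠ a ∧ x ≠ b), f x = ∑ x, f x - f a - f b := by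
  have hfilter : univ.filter (fun x => x ≠ a ∧ x ≠ b) = (univ.erase a).erase b := by
    ext x; simp [and_comm]
  rw [hfilter, sum_erase_eq_sub (mem_erase.2 ⟨hab.symm, mem_univ b⟩),
    sum_erase_eq_sub (mem_univ a)]

theorem reduced_coproduct_prod_of_primitive {R A ι : Type*} [CommRing R] [CommRing A]
    [Algebra R A] [Fintype ι] [DecidableEq ι] [Nonempty ι]
    (Δ : A →ₐ[R] A ⊗[R] A) (x : ι → A) (hx : ∀ i, Δ (x i) = x i ⊗ₜ[R] 1 + 1 ⊗ₜ[R] x i) :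
    Δ (∏ i, x i) - (∏ i, x i) ⊗ₜ[R] 1 - 1 ⊗ₜ[R] ∏ i, x i =
      ∑ S ∈ Finset.univ.filter (fun S => S ≠ ∅ ∧ S ≠ Finset.univ),
        (∏ i ∈ Sᶜ, x i) ⊗ₜ[R] (∏ i ∈ S, x i) := by
  rw [Finset.sum_filter_ne_and_ne _ Finset.univ_nonempty.ne_empty.symm,
    coproduct_prod_of_primitive Δ x hx]
  simp

section Words

variable {d : ℕ}

theorem subL_univ (l : List (Fin d)) : subL l Finset.univ = l := by
  rw [subL, Fin.sort_univ, List.map_get_finRange]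

theorem subL_ne_nil {l : List (Fin d)} {S : Finset (Fin l.length)} (hS : S ≠ ∅) :
    subL l S ≠ [] := by
  simpa [subL, ← List.length_eq_zero_iff] using hS

theorem dotP_subL {H : Type*} [CommRing H] [Algebra ℝ H] (B : List (Fin d) → H →ₗ[ℝ] H)
    (l : List (Fin d)) (S : Finset (Fin l.length)) :
    dotP B (subL l S) = ∏ i ∈ S, B [l.get i] 1 := by
  rw [dotP, subL, List.map_map, Finset.prod_eq_multiset_prod, ← Finset.sort_eq S (· ≤ ·),
    Multiset.map_coe, Multiset.prod_coe]
  rfl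

end Words

theorem bracket_polynomial_via_reduced_coproduct_general {d : ℕ} {H : Type*}
    [CommRing H] [Algebra ℝ H]
    (Δ : H →ₐ[ℝ] H ⊗[ℝ] H)
    (B : List (Fin d) → H →ₗ[ℝ] H)
    (hΔB : ∀ (a : List (Fin d)) (σ : H),
      Δ (B a σ) = B a σ ⊗ₜ[ℝ] 1 + LinearMap.lTensor H (B a) (Δ σ))
    (Bb : H ⊗[ℝ] H →ₗ[ℝ] H)
    (hBb : ∀ (σ : H) (t : List (Fin d)), t ≠ [] →
      Bb (σ ⊗ₜ[ℝ] dotP B t) = B t σ)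
    (l : List (Fin d)) (hl : l ≠ []) :
    bpOf B l =
      dotP B l -
        Bb (Δ (dotP B l) - dotP B l ⊗ₜ[ℝ] 1 - 1 ⊗ₜ[ℝ] dotP B l) := by
  have : Nonempty (Fin l.length) := ⟨⟨0, List.length_pos_iff.2 hl⟩⟩
  have hdot : dotP B l = ∏ i, B [l.get i] 1 := by rw [← dotP_subL, subL_univ]
  rw [bpOf, hdot, reduced_coproduct_prod_of_primitive Δ _
    fun i => coproduct_apply_one_of_cocycle Δ _ (hΔB [l.get i]), map_sum]
  congr 1
  refine Finset.sum_congr rfl fun S hS => ?_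
  rw [← dotP_subL, ← dotP_subL, hBb _ _ (subL_ne_nil (Finset.mem_filter.1 hS).2.1)]

/-- the bracket polynomial equals
`•_{i₁}⋯•_{iₙ} − B⁺(Δ'(•_{i₁}⋯•_{iₙ}))`, where `Δ'` is the reduced coproduct and
`B⁺` is the linear map sending `σ ⊗ •_{b₁}⋯•_{b_k}` to `B⁺_{(b₁⋯b_k)}(σ)`. -/
theorem bracket_polynomial_via_reduced_coproduct {d : ℕ} {H : Type*}
    [CommRing H] [Algebra ℝ H]
    (γ : ℝ) (hγ0 : 0 < γ) (hγ1 : γ < 1)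
    (Δ : H →ₐ[ℝ] H ⊗[ℝ] H)
    (B : List (Fin d) → H →ₗ[ℝ] H)
    (hΔB : ∀ (a : List (Fin d)) (σ : H),
      Δ (B a σ) = B a σ ⊗ₜ[ℝ] 1 + LinearMap.lTensor H (B a) (Δ σ))
    (Bb : H ⊗[ℝ] H →ₗ[ℝ] H)
    (hBb : ∀ (σ : H) (t : List (Fin d)), t ≠ [] →
      Bb (σ ⊗ₜ[ℝ] dotP B t) = B t σ)
    (l : List (Fin d)) (hl : l ≠ []) (hlen : l.length ≤ Nat.floor γ⁻¹) :
    bpOf B l =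
      dotP B l -
        Bb (Δ (dotP B l) - dotP B l ⊗ₜ[ℝ] 1 - 1 ⊗ₜ[ℝ] dotP B l) :=
  bracket_polynomial_via_reduced_coproduct_general Δ B hΔB Bb hBb l hl

end
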